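/- Let V be a finite-dimensional real vector space with skew-symmetric bilinear form Φ and subspaces A, B, C on which Φ vanishes identically, with Wall–Maslov index σ(V;A,B,C) defined as the signature of the induced symmetric form Ψ on W = (A ∩ (B+C))/(A∩B + A∩C). Then σ(V;A,B,C) is invariant under cyclic permutations of (A,B,C) and changes sign under transpositions: σ(V;A,B,C) = σ(V;B,C,A) = σ(V;C,A,B) = -σ(V;B,A,C) = -σ(V;A,C,B) = -σ(V;C,B,A). -/

import Mathlib

open LinearMap (BilinForm)

/-- The Wall space W = (A ∩ (B + C)) / (A ∩ B + A ∩ C). -/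
abbrev WallSpace {V : Type} [AddCommGroup V] [Module ℝ V] (A B C : Submodule ℝ V) :=
  ↥(A ⊓ (B ⊔ C)) ⧸ (Submodule.comap (A ⊓ (B ⊔ C)).subtype (A ⊓ B ⊔ A ⊓ C))

/-- For a' ∈ A ∩ (B + C), a chosen element b' ∈ B such that a' = -b' - c' with c' ∈ C. -/
noncomputable def wallB {V : Type} [AddCommGroup V] [Module ℝ V] (A B C : Submodule ℝ V)
    (a' : ↥(A ⊓ (B ⊔ C))) : V :=
  -(Submodule.mem_sup.mp (Submodule.mem_inf.mp a'.2).2).choose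

/-- Wall's induced pairing Ψ on the Wall space: Ψ([a],[a']) = Φ(a, b') where
a' = -b' - c' with b' ∈ B, c' ∈ C.  (Well-defined when Φ vanishes on A, B and C.) -/
noncomputable def wallForm {V : Type} [AddCommGroup V] [Module ℝ V] (Φ : BilinForm ℝ V)
    (A B C : Submodule ℝ V) : WallSpace A B C → WallSpace A B C → ℝ :=
  fun x y => Φ (x.out : V) (wallB A B C y.out)

/-- The dimension of a maximal positive definite subspace for a pairing. -/
noncomputable def posIndexFun (W : Type) [AddCommGroup W] [Module ℝ W]
    (f : W → W → ℝ) : ℕ :=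
  sSup {n | ∃ U : Submodule ℝ W, Module.finrank ℝ U = n ∧ ∀ v ∈ U, v ≠ 0 → 0 < f v v}

/-- The signature of a pairing. -/
noncomputable def signatureFun (W : Type) [AddCommGroup W] [Module ℝ W]
    (f : W → W → ℝ) : ℤ :=
  (posIndexFun W f : ℤ) - (posIndexFun W (fun x y => -(f x y)) : ℤ)

/-- Wall's Maslov triple index σ(V;A,B,C): the signature of the induced symmetric form Ψ
on W = (A ∩ (B + C)) / (A ∩ B + A ∩ C). -/
noncomputable def maslov {V : Type} [AddCommGroup V] [Module ℝ V] (Φ : BilinForm ℝ V)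
    (A B C : Submodule ℝ V) : ℤ :=
  signatureFun (WallSpace A B C) (wallForm Φ A B C)

/-!
Write `a ∈ A ∩ (B + C)` as `a + b + c = 0` with `b ∈ B`, `c ∈ C`. Then `Ψ([a],[a]) = Φ(a, b)`,
and since `A`, `B`, `C` are isotropic and `Φ` is skew, `Φ(a, b) = Φ(b, c)` while
`Φ(a, c) = -Φ(a, b)`. Hence `[a] ↦ [b]` carries the quadratic form of `σ(V;A,B,C)` to that of
`σ(V;B,C,A)`, and `[a] ↦ [a]` carries it to minus that of `σ(V;A,C,B)`. A linear map that
preserves a quadratic form is injective on every positive definite subspace, so maps in both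
directions give equal positive and negative indices. The cyclic symmetry and one transposition
generate all the stated identities.
-/

def LinearMap.BilinForm.IsTotallyIsotropic {R M : Type*} [CommRing R] [AddCommGroup M]
    [Module R M] (Φ : BilinForm R M) (A : Submodule R M) : Prop :=
  ∀ x ∈ A, ∀ y ∈ A, Φ x y = 0

def posDefDims (W : Type) [AddCommGroup W] [Module ℝ W] (f : W → W → ℝ) : Set ℕ :=
  {n | ∃ U : Submodule ℝ W, Module.finrank ℝ U = n ∧ ∀ v ∈ U, v ≠ 0 → 0 < f v v}

section Signature

variable {W W' : Type} [AddCommGroup W] [Module ℝ W] [AddCommGroup W'] [Module ℝ W']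
  {f : W → W → ℝ} {g : W' → W' → ℝ}

theorem posDefDims_subset_of_linearMap (e : W →ₗ[ℝ] W') (hf0 : f 0 0 = 0)
    (he : ∀ x, g (e x) (e x) = f x x) : posDefDims W f ⊆ posDefDims W' g := by
  rintro _ ⟨U, rfl, hU⟩
  have hinj : Function.Injective (e.comp U.subtype) := by
    refine (injective_iff_map_eq_zero _).2 fun u hu => ?_
    by_contra hne
    have hpos := hU u u.2 (by simpa using hne)
    rw [← he, show e u = 0 from hu, ← map_zero e, he, hf0] at hpos
    exact hpos.false
  refine ⟨U.map e, ?_, ?_⟩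
  · rw [← LinearMap.finrank_range_of_inj hinj, LinearMap.range_comp, Submodule.range_subtype]
  · rintro _ ⟨u, hu, rfl⟩ hne
    rw [he]
    exact hU u hu (by rintro rfl; exact hne (map_zero e))

theorem posIndexFun_eq_of_linearMaps (e : W →ₗ[ℝ] W') (e' : W' →ₗ[ℝ] W) (hf0 : f 0 0 = 0)
    (hg0 : g 0 0 = 0) (he : ∀ x, g (e x) (e x) = f x x) (he' : ∀ y, f (e' y) (e' y) = g y y) :
    posIndexFun W f = posIndexFun W' g :=
  congrArg sSup ((posDefDims_subset_of_linearMap e hf0 he).antisymm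
    (posDefDims_subset_of_linearMap e' hg0 he'))

theorem signatureFun_eq_of_linearMaps (e : W →ₗ[ℝ] W') (e' : W' →ₗ[ℝ] W) (hf0 : f 0 0 = 0)
    (hg0 : g 0 0 = 0) (he : ∀ x, g (e x) (e x) = f x x) (he' : ∀ y, f (e' y) (e' y) = g y y) :
    signatureFun W f = signatureFun W' g := by
  rw [signatureFun, signatureFun, posIndexFun_eq_of_linearMaps e e' hf0 hg0 he he',
    posIndexFun_eq_of_linearMaps (f := fun x y => -f x y) (g := fun x y => -g x y) e e'
      (neg_eq_zero.2 hf0) (neg_eq_zero.2 hg0) (fun x => congrArg Neg.neg (he x))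
      (fun y => congrArg Neg.neg (he' y))]

theorem signatureFun_neg : signatureFun W (fun x y => -f x y) = -signatureFun W f := by
  simp only [signatureFun, neg_neg, neg_sub]

end Signature

section Decomposition

variable {V : Type} [AddCommGroup V] [Module ℝ V] {A B C : Submodule ℝ V}

theorem wallB_mem (a : ↥(A ⊓ (B ⊔ C))) : wallB A B C a ∈ B :=
  B.neg_mem (Submodule.mem_sup.mp (Submodule.mem_inf.mp a.2).2).choose_spec.1

theorem add_wallB_mem (a : ↥(A ⊓ (B ⊔ C))) : (a : V) + wallB A B C a ∈ C := by
  obtain ⟨-, c, hc, hbc⟩ := (Submodule.mem_sup.mp (Submodule.mem_inf.mp a.2).2).choose_spec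
  rw [wallB, ← sub_eq_add_neg, ← eq_sub_of_add_eq' hbc]
  exact hc

theorem wallB_sub_mem_inf (a : ↥(A ⊓ (B ⊔ C))) {b : V} (hb : b ∈ B) (hab : (a : V) + b ∈ C) :
    wallB A B C a - b ∈ B ⊓ C :=
  ⟨sub_mem (wallB_mem a) hb, by simpa using sub_mem (add_wallB_mem a) hab⟩

theorem mem_inf_sup_of_add_mem {a b : V} (ha : a ∈ A) (hb : b ∈ B) (hab : a + b ∈ C) :
    b ∈ B ⊓ (C ⊔ A) :=
  ⟨hb, Submodule.mem_sup.2 ⟨a + b, hab, -a, A.neg_mem ha, by abel⟩⟩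

theorem wallB_mem_inf_sup (a : ↥(A ⊓ (B ⊔ C))) : wallB A B C a ∈ B ⊓ (C ⊔ A) :=
  mem_inf_sup_of_add_mem (Submodule.mem_inf.1 a.2).1 (wallB_mem a) (add_wallB_mem a)

theorem mem_sup_inf_of_add_mem {a b : V} (ha : a ∈ A ⊓ B ⊔ A ⊓ C) (hb : b ∈ B)
    (hab : a + b ∈ C) : b ∈ B ⊓ C ⊔ B ⊓ A := by
  obtain ⟨u, hu, w, hw, rfl⟩ := Submodule.mem_sup.1 ha
  have hbu : b + u ∈ C := by
    convert sub_mem hab hw.2 using 1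
    abel
  exact Submodule.mem_sup.2
    ⟨b + u, ⟨add_mem hb hu.2, hbu⟩, -u, ⟨B.neg_mem hu.2, A.neg_mem hu.1⟩, by abel⟩

theorem WallSpace.mk_eq_mk_iff {x y : ↥(A ⊓ (B ⊔ C))} :
    (Submodule.Quotient.mk x : WallSpace A B C) = Submodule.Quotient.mk y ↔
      (x : V) - y ∈ A ⊓ B ⊔ A ⊓ C :=
  Submodule.Quotient.eq _

theorem WallSpace.mk_eq_mk {x y : ↥(A ⊓ (B ⊔ C))} (h : (x : V) - y ∈ A ⊓ B) :
    (Submodule.Quotient.mk x : WallSpace A B C) = Submodule.Quotient.mk y :=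
  WallSpace.mk_eq_mk_iff.2 (Submodule.mem_sup_left h)

end Decomposition

section Isotropic

variable {V : Type} [AddCommGroup V] [Module ℝ V] {Φ : BilinForm ℝ V} {A B C : Submodule ℝ V}

theorem apply_eq_zero_of_mem_sup_of_mem_inf (hB : Φ.IsTotallyIsotropic B)
    (hC : Φ.IsTotallyIsotropic C) {x d : V} (hx : x ∈ B ⊔ C) (hd : d ∈ B ⊓ C) : Φ x d = 0 := by
  obtain ⟨b, hb, c, hc, rfl⟩ := Submodule.mem_sup.1 hx
  rw [map_add, LinearMap.add_apply, hB b hb d hd.1, hC c hc d hd.2, add_zero]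

theorem apply_eq_of_sub_mem_left (hA : Φ.IsTotallyIsotropic A) (hB : Φ.IsTotallyIsotropic B)
    (hC : Φ.IsTotallyIsotropic C) {a₁ a₂ a' b : V} (ha : a₁ - a₂ ∈ A ⊓ B ⊔ A ⊓ C)
    (ha' : a' ∈ A) (hb : b ∈ B) (hab : a' + b ∈ C) : Φ a₁ b = Φ a₂ b := by
  obtain ⟨u, hu, w, hw, huw⟩ := Submodule.mem_sup.1 ha
  have hwb : Φ w b = 0 := by
    have := map_add (Φ w) a' b
    rw [hC w hw.2 _ hab, hA w hw.1 a' ha'] at this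
    linarith
  rw [← sub_eq_zero, ← LinearMap.sub_apply, ← map_sub, ← huw, map_add, LinearMap.add_apply,
    hB u hu.2 b hb, hwb, add_zero]

theorem apply_eq_of_sub_mem_right (hA : Φ.IsTotallyIsotropic A) (hB : Φ.IsTotallyIsotropic B)
    (hC : Φ.IsTotallyIsotropic C) {a a'₁ a'₂ b₁ b₂ : V} (ha : a ∈ A ⊓ (B ⊔ C))
    (ha' : a'₁ - a'₂ ∈ A ⊓ B ⊔ A ⊓ C) (hb₁ : b₁ ∈ B) (hb₂ : b₂ ∈ B) (h₁ : a'₁ + b₁ ∈ C)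
    (h₂ : a'₂ + b₂ ∈ C) : Φ a b₁ = Φ a b₂ := by
  obtain ⟨u, hu, w, hw, huw⟩ := Submodule.mem_sup.1 ha'
  have hd : b₁ - b₂ + u ∈ B ⊓ C := by
    have hd_eq : b₁ - b₂ + u = a'₁ + b₁ - (a'₂ + b₂) - w := by
      rw [eq_sub_of_add_eq huw]
      abel
    exact ⟨add_mem (sub_mem hb₁ hb₂) hu.2, hd_eq ▸ sub_mem (sub_mem h₁ h₂) hw.2⟩
  have hsum := apply_eq_zero_of_mem_sup_of_mem_inf hB hC ha.2 hd
  rw [map_add, hA a ha.1 u hu.1, add_zero, map_sub] at hsum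
  exact sub_eq_zero.1 hsum

end Isotropic

section WallMaps

variable {V : Type} [AddCommGroup V] [Module ℝ V]

noncomputable def cycMap (A B C : Submodule ℝ V) : WallSpace A B C →ₗ[ℝ] WallSpace B C A :=
  Submodule.liftQ _
    { toFun := fun a => Submodule.Quotient.mk ⟨wallB A B C a, wallB_mem_inf_sup a⟩
      map_add' := fun a a' => by
        rw [← Submodule.Quotient.mk_add]
        refine WallSpace.mk_eq_mk (wallB_sub_mem_inf _ (add_mem (wallB_mem a) (wallB_mem a')) ?_)
        rw [Submodule.coe_add, Submodule.coe_add, add_add_add_comm]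
        exact add_mem (add_wallB_mem a) (add_wallB_mem a')
      map_smul' := fun r a => by
        rw [RingHom.id_apply, ← Submodule.Quotient.mk_smul]
        refine WallSpace.mk_eq_mk (wallB_sub_mem_inf _ (B.smul_mem r (wallB_mem a)) ?_)
        rw [Submodule.coe_smul, Submodule.coe_smul, ← smul_add]
        exact C.smul_mem r (add_wallB_mem a) }
    fun n hn => (Submodule.Quotient.mk_eq_zero _).2
      (mem_sup_inf_of_add_mem hn (wallB_mem n) (add_wallB_mem n))

theorem cycMap_mk {A B C : Submodule ℝ V} (a : ↥(A ⊓ (B ⊔ C))) :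
    cycMap A B C (Submodule.Quotient.mk a) =
      Submodule.Quotient.mk ⟨wallB A B C a, wallB_mem_inf_sup a⟩ :=
  rfl

noncomputable def swapMap (A B C : Submodule ℝ V) : WallSpace A B C →ₗ[ℝ] WallSpace A C B :=
  Submodule.mapQ _ _ (Submodule.inclusion (inf_le_inf_left A (sup_comm B C).le))
    fun _ hx => (sup_comm (A ⊓ B) (A ⊓ C)).le hx

theorem swapMap_mk {A B C : Submodule ℝ V} (a : ↥(A ⊓ (B ⊔ C))) :
    swapMap A B C (Submodule.Quotient.mk a) =
      Submodule.Quotient.mk (Submodule.inclusion (inf_le_inf_left A (sup_comm B C).le) a) :=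
  rfl

end WallMaps

section WallForm

variable {V : Type} [AddCommGroup V] [Module ℝ V] {Φ : BilinForm ℝ V} {A B C : Submodule ℝ V}

theorem wallForm_mk_mk (hA : Φ.IsTotallyIsotropic A) (hB : Φ.IsTotallyIsotropic B)
    (hC : Φ.IsTotallyIsotropic C) (a a' : ↥(A ⊓ (B ⊔ C))) {b : V} (hb : b ∈ B)
    (hab : (a' : V) + b ∈ C) :
    wallForm Φ A B C (Submodule.Quotient.mk a) (Submodule.Quotient.mk a') = Φ a b := by
  set x := (Submodule.Quotient.mk a : WallSpace A B C).out
  set x' := (Submodule.Quotient.mk a' : WallSpace A B C).out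
  have hx : (x : V) - a ∈ A ⊓ B ⊔ A ⊓ C := WallSpace.mk_eq_mk_iff.1 (Quotient.out_eq _)
  have hx' : (x' : V) - a' ∈ A ⊓ B ⊔ A ⊓ C := WallSpace.mk_eq_mk_iff.1 (Quotient.out_eq _)
  calc wallForm Φ A B C (Submodule.Quotient.mk a) (Submodule.Quotient.mk a')
      = Φ x (wallB A B C x') := rfl
    _ = Φ a (wallB A B C x') :=
      apply_eq_of_sub_mem_left hA hB hC hx (Submodule.mem_inf.1 x'.2).1 (wallB_mem x')
        (add_wallB_mem x')
    _ = Φ a b :=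
      apply_eq_of_sub_mem_right hA hB hC a.2 hx' (wallB_mem x') hb (add_wallB_mem x') hab

theorem wallForm_zero (hA : Φ.IsTotallyIsotropic A) (hB : Φ.IsTotallyIsotropic B)
    (hC : Φ.IsTotallyIsotropic C) : wallForm Φ A B C 0 0 = 0 := by
  rw [← Submodule.Quotient.mk_zero, wallForm_mk_mk hA hB hC 0 0 B.zero_mem (by simp),
    map_zero]

theorem wallForm_cycMap (hskew : ∀ x y, Φ x y = -(Φ y x)) (hA : Φ.IsTotallyIsotropic A)
    (hB : Φ.IsTotallyIsotropic B) (hC : Φ.IsTotallyIsotropic C) (x : WallSpace A B C) :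
    wallForm Φ B C A (cycMap A B C x) (cycMap A B C x) = wallForm Φ A B C x x := by
  obtain ⟨a, rfl⟩ := Submodule.Quotient.mk_surjective _ x
  have hb := wallB_mem a
  have hc := add_wallB_mem a
  rw [cycMap_mk, wallForm_mk_mk hB hC hA _ _ (C.neg_mem hc) (by simpa using A.neg_mem a.2.1),
    wallForm_mk_mk hA hB hC a a hb hc, map_neg, map_add, hB _ hb _ hb, add_zero, hskew, neg_neg]

theorem wallForm_swapMap (hA : Φ.IsTotallyIsotropic A) (hB : Φ.IsTotallyIsotropic B)
    (hC : Φ.IsTotallyIsotropic C) (x : WallSpace A B C) :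
    wallForm Φ A C B (swapMap A B C x) (swapMap A B C x) = -wallForm Φ A B C x x := by
  obtain ⟨a, rfl⟩ := Submodule.Quotient.mk_surjective _ x
  have hc := add_wallB_mem a
  rw [swapMap_mk, wallForm_mk_mk hA hC hB _ _ (C.neg_mem hc)
      (by simpa using B.neg_mem (wallB_mem a)),
    wallForm_mk_mk hA hB hC a a (wallB_mem a) hc, Submodule.coe_inclusion, map_neg, map_add,
    hA _ a.2.1 _ a.2.1, zero_add]

theorem maslov_cycle (hskew : ∀ x y, Φ x y = -(Φ y x)) (hA : Φ.IsTotallyIsotropic A)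
    (hB : Φ.IsTotallyIsotropic B) (hC : Φ.IsTotallyIsotropic C) :
    maslov Φ A B C = maslov Φ B C A :=
  signatureFun_eq_of_linearMaps (cycMap A B C) ((cycMap C A B).comp (cycMap B C A))
    (wallForm_zero hA hB hC) (wallForm_zero hB hC hA) (wallForm_cycMap hskew hA hB hC)
    fun y => by
      rw [LinearMap.comp_apply, wallForm_cycMap hskew hC hA hB, wallForm_cycMap hskew hB hC hA]

theorem maslov_swap (hA : Φ.IsTotallyIsotropic A) (hB : Φ.IsTotallyIsotropic B)
    (hC : Φ.IsTotallyIsotropic C) : maslov Φ A B C = -maslov Φ A C B := by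
  rw [maslov, maslov, ← signatureFun_neg]
  exact signatureFun_eq_of_linearMaps (swapMap A B C) (swapMap A C B) (wallForm_zero hA hB hC)
    (neg_eq_zero.2 (wallForm_zero hA hC hB))
    (fun x => by rw [wallForm_swapMap hA hB hC, neg_neg]) (wallForm_swapMap hA hC hB)

end WallForm

theorem maslov_permutations_general {V : Type} [AddCommGroup V] [Module ℝ V]
    (Φ : BilinForm ℝ V)
    (hskew : ∀ x y, Φ x y = -(Φ y x))
    (A B C : Submodule ℝ V)
    (hA : ∀ x ∈ A, ∀ y ∈ A, Φ x y = 0)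
    (hB : ∀ x ∈ B, ∀ y ∈ B, Φ x y = 0)
    (hC : ∀ x ∈ C, ∀ y ∈ C, Φ x y = 0) :
    maslov Φ A B C = maslov Φ B C A ∧
    maslov Φ A B C = maslov Φ C A B ∧
    maslov Φ A B C = -maslov Φ B A C ∧
    maslov Φ A B C = -maslov Φ A C B ∧
    maslov Φ A B C = -maslov Φ C B A := by
  have cycABC := maslov_cycle hskew hA hB hC
  have cycBCA := maslov_cycle hskew hB hC hA
  refine ⟨cycABC, cycABC.trans cycBCA, ?_, maslov_swap hA hB hC, ?_⟩
  · rw [maslov_swap hB hA hC, neg_neg, cycABC]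
  · rw [maslov_swap hC hB hA, neg_neg, cycABC, cycBCA]

/-- The Wall–Maslov triple index is invariant under cyclic permutations of
(A,B,C) and changes sign under transpositions. -/
theorem maslov_permutations {V : Type} [AddCommGroup V] [Module ℝ V] [FiniteDimensional ℝ V]
    (Φ : BilinForm ℝ V)
    (hskew : ∀ x y, Φ x y = -(Φ y x))
    (A B C : Submodule ℝ V)
    (hA : ∀ x ∈ A, ∀ y ∈ A, Φ x y = 0)
    (hB : ∀ x ∈ B, ∀ y ∈ B, Φ x y = 0)
    (hC : ∀ x ∈ C, ∀ y ∈ C, Φ x y = 0) :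
    maslov Φ A B C = maslov Φ B C A ∧
    maslov Φ A B C = maslov Φ C A B ∧
    maslov Φ A B C = -maslov Φ B A C ∧
    maslov Φ A B C = -maslov Φ A C B ∧
    maslov Φ A B C = -maslov Φ C B A :=
  maslov_permutations_general Φ hskew A B C hA hB hC
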